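/- (Hahn convolution identity) For λ₁, λ₂ ∈ ℂ with λ₁, λ₂ ∉ {0,−1,...,−(N−1)} and λ₁+λ₂ ∉ {0,...,−(2N−2)}, and for 0 ≤ l ≤ N, the polynomial identity (x+y)^N P_l^{λ₁,λ₂}((y−x)/(x+y)) = ((λ₁)_l / l!) ∑_{k=0}^{N} binom(N,k) Q_{l,k} x^k y^{N−k} holds in ℂ[x,y], where Q_{l,k} = ₃F₂(−l, l+λ₁+λ₂−1, −k; λ₁, −N; 1). -/

import Mathlib

open Finset Polynomial

/-- Rising Pochhammer symbol `(x)_m = x(x+1)⋯(x+m-1)` over `ℂ`. -/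
noncomputable def poch (x : ℂ) (m : ℕ) : ℂ := (ascPochhammer ℂ m).eval x

/-- Jacobi polynomial `P_l^{a,b}(x) = ((a)_l/l!) ₂F₁(-l, l+a+b-1; a; (1-x)/2)`. -/
noncomputable def jacobiP (l : ℕ) (a b : ℂ) : Polynomial ℂ :=
  C (poch a l / (l.factorial : ℂ)) *
    ∑ n ∈ range (l + 1),
      C (poch (-(l : ℂ)) n * poch ((l : ℂ) + a + b - 1) n / (poch a n * (n.factorial : ℂ))) *
        (C (2⁻¹ : ℂ) * (1 - X)) ^ n

/-- Homogenisation: for a one-variable polynomial `q` and `n ≥ deg q`, the polynomial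
`s^n q(d/s)` written as `∑ᵢ (coeff q i) dⁱ s^{n-i}`; with `s = x+y`, `d = y-x` this is
`(x+y)^n q((y-x)/(x+y)) ∈ ℂ[x,y]`. -/
noncomputable def homog2 (q : Polynomial ℂ) (n : ℕ) : MvPolynomial (Fin 2) ℂ :=
  ∑ i ∈ range (n + 1),
    MvPolynomial.C (q.coeff i) * (MvPolynomial.X 1 - MvPolynomial.X 0) ^ i *
      (MvPolynomial.X 0 + MvPolynomial.X 1) ^ (n - i)

/-- Value `Q_{l,k}` of the Hahn polynomial:
`₃F₂(-l, l+λ₁+λ₂-1, -k; λ₁, -N; 1)` as a terminating sum. -/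
noncomputable def hahnQ (lam1 lam2 : ℂ) (N l k : ℕ) : ℂ :=
  ∑ n ∈ range (l + 1),
    poch (-(l : ℂ)) n * poch ((l : ℂ) + lam1 + lam2 - 1) n * poch (-(k : ℂ)) n /
      (poch lam1 n * poch (-(N : ℂ)) n * (n.factorial : ℂ))

/-!
Under `x ↦ y - x`, `y ↦ x + y` the homogenised `n`-th term `((1 - t)/2)^n` of the `₂F₁` becomes
`x^n (x + y)^(N - n)`, because `((x + y) - (y - x))/2 = x`. Expanding `(x + y)^(N - n)` by the
binomial theorem and using `C(N, k) (-k)_n / (-N)_n = C(N - n, k - n)` (and `(-k)_n = 0` for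
`k < n`) rewrites this as the `n`-th term of the `₃F₂` defining `Q_{l,k}`, summed against
`C(N, k) x^k y^(N - k)`; exchanging the two finite sums gives the identity.
-/

lemma poch_neg_natCast (k n : ℕ) : poch (-(k : ℂ)) n = (-1) ^ n * (k.descFactorial n : ℂ) := by
  rw [poch, ascPochhammer_eval_neg_eq_descPochhammer, descPochhammer_eval_eq_descFactorial]

lemma poch_neg_natCast_ne_zero {N n : ℕ} (h : n ≤ N) : poch (-(N : ℂ)) n ≠ 0 := by
  rw [poch_neg_natCast]
  exact mul_ne_zero (pow_ne_zero _ (by norm_num))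
    (Nat.cast_ne_zero.2 (Nat.descFactorial_eq_zero_iff_lt.not.2 (not_lt.2 h)))

lemma Nat.choose_add_mul_descFactorial (N n j : ℕ) :
    N.choose (n + j) * (n + j).descFactorial n = (N - n).choose j * N.descFactorial n := by
  have hchoose := Nat.choose_mul (n := N) (Nat.le_add_right n j)
  rw [Nat.add_sub_cancel_left] at hchoose
  rw [Nat.descFactorial_eq_factorial_mul_choose, Nat.descFactorial_eq_factorial_mul_choose]
  linear_combination n.factorial * hchoose

lemma choose_mul_poch_neg_div_poch_neg (N n j : ℕ) (h : n + j ≤ N) :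
    (N.choose (n + j) : ℂ) * poch (-((n + j : ℕ) : ℂ)) n / poch (-(N : ℂ)) n =
      (N - n).choose j := by
  rw [div_eq_iff (poch_neg_natCast_ne_zero (by omega)), poch_neg_natCast, poch_neg_natCast]
  have key : ((N.choose (n + j) * (n + j).descFactorial n : ℕ) : ℂ) =
      ((N - n).choose j * N.descFactorial n : ℕ) := by
    rw [Nat.choose_add_mul_descFactorial]
  push_cast at key
  linear_combination (-1 : ℂ) ^ n * key

lemma pow_mul_add_pow_eq_sum {A : Type*} [CommRing A] [Algebra ℂ A] (x y : A) {n N : ℕ}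
    (h : n ≤ N) :
    x ^ n * (x + y) ^ (N - n) = ∑ k ∈ range (N + 1),
      ((N.choose k : ℂ) * poch (-(k : ℂ)) n / poch (-(N : ℂ)) n) • (x ^ k * y ^ (N - k)) := by
  rw [show N + 1 = n + (N - n + 1) by omega, sum_range_add,
    sum_eq_zero fun k hk => by
      rw [poch, ascPochhammer_eval_neg_coe_nat_of_lt (mem_range.1 hk)]; simp,
    zero_add, add_pow, mul_sum]
  refine sum_congr rfl fun j hj => ?_
  have hj : n + j ≤ N := by have := mem_range.1 hj; omega
  rw [choose_mul_poch_neg_div_poch_neg N n j hj, Nat.cast_smul_eq_nsmul, nsmul_eq_mul,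
    show N - (n + j) = N - n - j by omega]
  ring

lemma Polynomial.homogenize_pow {R : Type*} [CommSemiring R] (p : R[X]) {m : ℕ}
    (hp : p.natDegree ≤ m) (k : ℕ) : (p ^ k).homogenize (k * m) = p.homogenize m ^ k := by
  simpa using homogenize_finsetProd (s := range k) (p := fun _ => p) (n := fun _ => m)
    (fun _ _ => hp)

lemma Polynomial.homogenize_add_right {R : Type*} [CommSemiring R] (p : R[X]) {m : ℕ}
    (hp : p.natDegree ≤ m) (k : ℕ) :
    p.homogenize (m + k) = p.homogenize m * MvPolynomial.X 1 ^ k := by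
  simpa using homogenize_mul p 1 hp (natDegree_one.trans_le k.zero_le)

lemma homog2_eq_aeval_homogenize (q : ℂ[X]) (n : ℕ) :
    homog2 q n = MvPolynomial.aeval ![MvPolynomial.X 1 - MvPolynomial.X 0,
      MvPolynomial.X 0 + MvPolynomial.X 1] (q.homogenize n) := by
  simp only [homog2, homogenize, Finset.Nat.sum_antidiagonal_eq_sum_range_succ_mk, map_sum,
    MvPolynomial.aeval_monomial]
  refine Finset.sum_congr rfl fun i _ => ?_
  simp [Finsupp.prod_fintype, Fin.prod_univ_two, mul_assoc]

lemma homog2_C_mul (a : ℂ) (q : ℂ[X]) (n : ℕ) :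
    homog2 (C a * q) n = MvPolynomial.C a * homog2 q n := by
  simp only [homog2_eq_aeval_homogenize, homogenize_C_mul, map_mul, MvPolynomial.aeval_C,
    MvPolynomial.algebraMap_eq]

lemma homog2_sum {ι : Type*} (s : Finset ι) (q : ι → ℂ[X]) (n : ℕ) :
    homog2 (∑ i ∈ s, q i) n = ∑ i ∈ s, homog2 (q i) n := by
  simp only [homog2_eq_aeval_homogenize, homogenize_finsetSum, map_sum]

lemma homog2_half_one_sub_X_pow {n N : ℕ} (h : n ≤ N) :
    homog2 ((C (2⁻¹ : ℂ) * (1 - X)) ^ n) N =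
      MvPolynomial.X 0 ^ n * (MvPolynomial.X 0 + MvPolynomial.X 1) ^ (N - n) := by
  have hdeg : (C (2⁻¹ : ℂ) * (1 - X)).natDegree ≤ 1 := by compute_degree
  rw [homog2_eq_aeval_homogenize, show N = n * 1 + (N - n) by omega,
    homogenize_add_right _ (natDegree_pow_le_of_le n hdeg), homogenize_pow _ hdeg]
  have hbase : MvPolynomial.aeval ![MvPolynomial.X 1 - MvPolynomial.X 0,
      MvPolynomial.X 0 + MvPolynomial.X 1] ((C (2⁻¹ : ℂ) * (1 - X)).homogenize 1) =
      (MvPolynomial.X 0 : MvPolynomial (Fin 2) ℂ) := by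
    simp only [homogenize_C_mul, homogenize_sub, homogenize_one, homogenize_X one_ne_zero]
    have h2 : (MvPolynomial.C 2⁻¹ : MvPolynomial (Fin 2) ℂ) * 2 = 1 := by
      rw [← map_ofNat MvPolynomial.C, ← map_mul]; norm_num
    simp only [map_mul, map_sub, map_pow, MvPolynomial.aeval_C, MvPolynomial.aeval_X,
      MvPolynomial.algebraMap_eq, Matrix.cons_val_zero, Matrix.cons_val_one]
    linear_combination MvPolynomial.X 0 * h2
  rw [map_mul, map_pow, map_pow, hbase]
  simp

theorem hahn_convolution_general (lam1 lam2 : ℂ) (N : ℕ) (l : ℕ) (hl : l ≤ N) :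
    homog2 (jacobiP l lam1 lam2) N =
      MvPolynomial.C (poch lam1 l / (l.factorial : ℂ)) *
        ∑ k ∈ range (N + 1),
          MvPolynomial.C ((N.choose k : ℂ) * hahnQ lam1 lam2 N l k) *
            MvPolynomial.X 0 ^ k * MvPolynomial.X 1 ^ (N - k) := by
  rw [jacobiP, homog2_C_mul, homog2_sum]
  congr 1
  calc _ = ∑ n ∈ range (l + 1), ∑ k ∈ range (N + 1),
        (poch (-(l : ℂ)) n * poch ((l : ℂ) + lam1 + lam2 - 1) n / (poch lam1 n * n.factorial) *
          ((N.choose k : ℂ) * poch (-(k : ℂ)) n / poch (-(N : ℂ)) n)) •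
          (MvPolynomial.X 0 ^ k * MvPolynomial.X 1 ^ (N - k) : MvPolynomial (Fin 2) ℂ) := by
        refine sum_congr rfl fun n hn => ?_
        have hnN : n ≤ N := (Nat.lt_succ_iff.1 (mem_range.1 hn)).trans hl
        rw [homog2_C_mul, homog2_half_one_sub_X_pow hnN, pow_mul_add_pow_eq_sum _ _ hnN,
          MvPolynomial.C_mul', smul_sum]
        simp only [smul_smul]
    _ = _ := by
        rw [sum_comm]
        refine sum_congr rfl fun k _ => ?_
        rw [hahnQ, mul_sum, map_sum, sum_mul, sum_mul]
        refine sum_congr rfl fun n _ => ?_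
        rw [MvPolynomial.C_mul', smul_mul_assoc]
        congr 1
        ring

theorem hahn_convolution (lam1 lam2 : ℂ) (N : ℕ) (hN : 0 < N) (l : ℕ) (hl : l ≤ N)
    (h1 : ∀ j : ℕ, j < N → lam1 ≠ -(j : ℂ))
    (h2 : ∀ j : ℕ, j < N → lam2 ≠ -(j : ℂ))
    (h12 : ∀ j : ℕ, j ≤ 2 * N - 2 → lam1 + lam2 ≠ -(j : ℂ)) :
    homog2 (jacobiP l lam1 lam2) N =
      MvPolynomial.C (poch lam1 l / (l.factorial : ℂ)) *
        ∑ k ∈ range (N + 1),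
          MvPolynomial.C ((N.choose k : ℂ) * hahnQ lam1 lam2 N l k) *
            MvPolynomial.X 0 ^ k * MvPolynomial.X 1 ^ (N - k) :=
  hahn_convolution_general lam1 lam2 N l hl
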